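/- Let p be a prime, n ≥ 1, T ∈ GL(n, ℚ_p) and a ∈ ℚ_p^n with 0 < ‖T^{-1}(a)‖_p < 1, so that T̄_a : S_n → S_n is a homeomorphism. For x ∈ S_n and j ≥ 1 set α_j(x) = ‖a + T(T̄_a^{j-1}(x))‖_p and β_{j,x} = α_1(x)·α_2(x)⋯α_j(x), with β_{0,x} = 1. Then for every j ≥ 1, T̄_a^j(x) = β_{j,x} T^j(x) + β_{j,x} Σ_{i=1}^{j} β_{j-i,x}^{-1} T^{i-1}(a), where the positive real numbers β_{j,x} and β_{j-i,x}^{-1}, which are integer powers of p, are interpreted as the corresponding rational scalars in ℚ_p. -/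

import Mathlib

open scoped MatrixGroups

/-- The real number `r`, assumed to be an integer power of `p`, interpreted as the
corresponding scalar in `ℚ_p` (junk value otherwise). -/
noncomputable def realToPadic (p : ℕ) [Fact p.Prime] (r : ℝ) : ℚ_[p] :=
  (p : ℚ_[p]) ^ ⌊Real.logb p r⌋

/-- The `affine` map `T̄_a` on the `p`-adic unit sphere:
`T̄_a(x) = ‖a + T(x)‖_p ⬝ (a + T(x))`. -/
noncomputable def affineSphereMap (p : ℕ) [Fact p.Prime] {n : ℕ}
    (T : Matrix (Fin n) (Fin n) ℚ_[p]) (a : Fin n → ℚ_[p]) (y : Fin n → ℚ_[p]) :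
    Fin n → ℚ_[p] :=
  realToPadic p ‖a + T.mulVec y‖ • (a + T.mulVec y)

/-- `α_j(x) = ‖a + T(T̄_a^{j-1}(x))‖_p`, for `j ≥ 1`. -/
noncomputable def alphaSeq (p : ℕ) [Fact p.Prime] {n : ℕ}
    (T : Matrix (Fin n) (Fin n) ℚ_[p]) (a : Fin n → ℚ_[p]) (x : Fin n → ℚ_[p]) (j : ℕ) :
    ℝ :=
  ‖a + T.mulVec ((affineSphereMap p T a)^[j - 1] x)‖

/-- `β_{j,x} = α_1(x) ⋯ α_j(x)`, with `β_{0,x} = 1` (the empty product). -/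
noncomputable def betaSeq (p : ℕ) [Fact p.Prime] {n : ℕ}
    (T : Matrix (Fin n) (Fin n) ℚ_[p]) (a : Fin n → ℚ_[p]) (x : Fin n → ℚ_[p]) (j : ℕ) :
    ℝ :=
  ∏ i ∈ Finset.Icc 1 j, alphaSeq p T a x i


/-! Because `‖T⁻¹ a‖ < 1`, the vector `a + T y` never vanishes for `y` on the unit sphere, so every
normalising factor `α_j` is an integer power of `p` and every iterate stays on the sphere.
On powers of `p` the identification with scalars of `ℚ_p` is multiplicative, so the orbit
`y_j = T̄_a^j x` satisfies the scaled affine recurrence `y_{j+1} = c_j (a + T y_j)` with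
`b_{j+1} = c_j b_j`, where `b_j`, `c_j` are the scalars of `β_{j,x}` and `α_{j+1}(x)`; unrolling
this recurrence gives the formula. -/

open Finset Matrix

theorem sum_Icc_succ_smul_pow_mulVec {K ι : Type*} [CommRing K] [Fintype ι] [DecidableEq ι]
    (A : Matrix ι ι K) (a : ι → K) (g : ℕ → K) (j : ℕ) :
    ∑ i ∈ Icc 1 (j + 1), g (j + 1 - i) • (A ^ (i - 1)) *ᵥ a =
      g j • a + A *ᵥ ∑ i ∈ Icc 1 j, g (j - i) • (A ^ (i - 1)) *ᵥ a := by
  rw [← add_sum_Ioc_eq_sum_Icc (by omega), ← Icc_add_one_left_eq_Ioc, ← map_add_right_Icc 1 j 1,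
    sum_map, mulVec_sum]
  simp only [addRightEmbedding_apply, Nat.add_sub_cancel, Nat.sub_self, pow_zero, one_mulVec,
    Nat.add_sub_add_right, mulVec_smul, mulVec_mulVec]
  congr 1
  refine Finset.sum_congr rfl fun i hi => ?_
  rw [← pow_succ', Nat.sub_add_cancel (mem_Icc.mp hi).1]

theorem eq_of_scaled_affine_recurrence {K ι : Type*} [Field K] [Fintype ι] [DecidableEq ι]
    (A : Matrix ι ι K) (a : ι → K) (y : ℕ → ι → K) (b c : ℕ → K) (hb_zero : b 0 = 1)
    (hb_succ : ∀ j, b (j + 1) = c j * b j) (hb_ne : ∀ j, b j ≠ 0)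
    (hy : ∀ j, y (j + 1) = c j • (a + A *ᵥ y j)) (j : ℕ) :
    y j = b j • (A ^ j) *ᵥ y 0 + b j • ∑ i ∈ Icc 1 j, (b (j - i))⁻¹ • (A ^ (i - 1)) *ᵥ a := by
  induction j with
  | zero => simp [hb_zero]
  | succ j ih =>
    rw [hy, ih, sum_Icc_succ_smul_pow_mulVec A a (fun k => (b k)⁻¹), hb_succ, pow_succ',
      ← mulVec_mulVec]
    simp only [mulVec_add, mulVec_smul, smul_add, smul_smul]
    rw [mul_assoc, mul_inv_cancel₀ (hb_ne j), mul_one]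
    abel

section Padic

variable {p : ℕ} [Fact p.Prime]

theorem realToPadic_zpow (m : ℤ) : realToPadic p ((p : ℝ) ^ m) = (p : ℚ_[p]) ^ m := by
  have hlog : Real.log p ≠ 0 :=
    (Real.log_pos (by exact_mod_cast (Fact.out : p.Prime).one_lt)).ne'
  rw [realToPadic, Real.logb, Real.log_zpow, mul_div_assoc, div_self hlog, mul_one,
    Int.floor_intCast]

theorem realToPadic_one : realToPadic p 1 = 1 := by
  simpa using realToPadic_zpow (p := p) 0

theorem realToPadic_ne_zero (r : ℝ) : realToPadic p r ≠ 0 :=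
  zpow_ne_zero _ (NeZero.ne _)

theorem exists_norm_eq_zpow {ι : Type*} [Fintype ι] {v : ι → ℚ_[p]} (hv : v ≠ 0) :
    ∃ m : ℤ, ‖v‖ = (p : ℝ) ^ m := by
  obtain ⟨i₀, -⟩ := Function.ne_iff.mp hv
  obtain ⟨i, -, hi⟩ := exists_mem_eq_sup univ ⟨i₀, mem_univ _⟩ fun i => ‖v i‖₊
  have hnorm : ‖v‖ = ‖v i‖ := congrArg NNReal.toReal hi
  have hvi : v i ≠ 0 := fun h => hv (norm_eq_zero.mp (by rw [hnorm, h, norm_zero]))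
  exact ⟨-(v i).valuation, by rw [hnorm, Padic.norm_eq_zpow_neg_valuation hvi]⟩

theorem norm_realToPadic_norm_smul {ι : Type*} [Fintype ι] {v : ι → ℚ_[p]} (hv : v ≠ 0) :
    ‖realToPadic p ‖v‖ • v‖ = 1 := by
  obtain ⟨m, hm⟩ := exists_norm_eq_zpow hv
  rw [norm_smul, hm, realToPadic_zpow, Padic.norm_p_zpow, ← zpow_add₀ (NeZero.ne _),
    neg_add_cancel, zpow_zero]

end Padic

theorem add_mulVec_ne_zero_of_norm_inv_mulVec_lt_one {K ι : Type*} [NormedField K] [Fintype ι]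
    [DecidableEq ι] (T : GL ι K) {a y : ι → K} (ha : ‖(T⁻¹ : GL ι K).val *ᵥ a‖ < 1)
    (hy : ‖y‖ = 1) : a + T.val *ᵥ y ≠ 0 := by
  intro h
  have : (T⁻¹ : GL ι K).val *ᵥ a = -y := by
    rw [eq_neg_of_add_eq_zero_left h, mulVec_neg, mulVec_mulVec, T.inv_mul, one_mulVec]
  rw [this, norm_neg, hy] at ha
  exact ha.false

section AffineSphereMap

variable {p : ℕ} [Fact p.Prime] {n : ℕ} {T : GL (Fin n) ℚ_[p]} {a x : Fin n → ℚ_[p]}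

theorem iterate_succ_affineSphereMap (A : Matrix (Fin n) (Fin n) ℚ_[p]) (j : ℕ) :
    (affineSphereMap p A a)^[j + 1] x =
      realToPadic p (alphaSeq p A a x (j + 1)) • (a + A *ᵥ (affineSphereMap p A a)^[j] x) := by
  rw [Function.iterate_succ_apply', alphaSeq, Nat.add_sub_cancel, affineSphereMap]

theorem betaSeq_succ (A : Matrix (Fin n) (Fin n) ℚ_[p]) (j : ℕ) :
    betaSeq p A a x (j + 1) = betaSeq p A a x j * alphaSeq p A a x (j + 1) :=
  prod_Icc_succ_top (by omega) _

variable (ha : ‖(T⁻¹ : GL (Fin n) ℚ_[p]).val *ᵥ a‖ < 1) (hx : ‖x‖ = 1)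
include ha hx

theorem norm_iterate_affineSphereMap (j : ℕ) : ‖(affineSphereMap p T.val a)^[j] x‖ = 1 := by
  induction j with
  | zero => exact hx
  | succ j ih =>
    rw [Function.iterate_succ_apply']
    exact norm_realToPadic_norm_smul (add_mulVec_ne_zero_of_norm_inv_mulVec_lt_one T ha ih)

theorem exists_alphaSeq_succ_eq_zpow (j : ℕ) :
    ∃ k : ℤ, alphaSeq p T.val a x (j + 1) = (p : ℝ) ^ k := by
  rw [alphaSeq, Nat.add_sub_cancel]
  exact exists_norm_eq_zpow
    (add_mulVec_ne_zero_of_norm_inv_mulVec_lt_one T ha (norm_iterate_affineSphereMap ha hx j))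

theorem exists_betaSeq_eq_zpow (j : ℕ) : ∃ m : ℤ, betaSeq p T.val a x j = (p : ℝ) ^ m := by
  induction j with
  | zero => exact ⟨0, by simp [betaSeq]⟩
  | succ j ih =>
    obtain ⟨m, hm⟩ := ih
    obtain ⟨k, hk⟩ := exists_alphaSeq_succ_eq_zpow ha hx j
    exact ⟨m + k, by rw [betaSeq_succ, hm, hk, zpow_add₀ (NeZero.ne _)]⟩

theorem realToPadic_betaSeq_succ (j : ℕ) :
    realToPadic p (betaSeq p T.val a x (j + 1)) =
      realToPadic p (alphaSeq p T.val a x (j + 1)) * realToPadic p (betaSeq p T.val a x j) := by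
  obtain ⟨m, hm⟩ := exists_betaSeq_eq_zpow ha hx j
  obtain ⟨k, hk⟩ := exists_alphaSeq_succ_eq_zpow ha hx j
  rw [betaSeq_succ, hm, hk, ← zpow_add₀ (NeZero.ne _), realToPadic_zpow, realToPadic_zpow,
    realToPadic_zpow, zpow_add₀ (NeZero.ne _), mul_comm]

theorem realToPadic_betaSeq_inv (j : ℕ) :
    realToPadic p (betaSeq p T.val a x j)⁻¹ = (realToPadic p (betaSeq p T.val a x j))⁻¹ := by
  obtain ⟨m, hm⟩ := exists_betaSeq_eq_zpow ha hx j
  rw [hm, ← _root_.zpow_neg, realToPadic_zpow, realToPadic_zpow, _root_.zpow_neg]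

end AffineSphereMap

theorem stmt19_general (p : ℕ) [Fact p.Prime] (n : ℕ) (T : GL (Fin n) ℚ_[p])
    (a : Fin n → ℚ_[p])
    (ha1 : ‖((T⁻¹ : GL (Fin n) ℚ_[p]) : Matrix (Fin n) (Fin n) ℚ_[p]).mulVec a‖ < 1)
    (x : Fin n → ℚ_[p]) (hx : ‖x‖ = 1) :
    ∀ j : ℕ, 1 ≤ j →
      (affineSphereMap p (T : Matrix (Fin n) (Fin n) ℚ_[p]) a)^[j] x =
        realToPadic p (betaSeq p (T : Matrix (Fin n) (Fin n) ℚ_[p]) a x j) •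
            (((T : Matrix (Fin n) (Fin n) ℚ_[p]) ^ j).mulVec x) +
          realToPadic p (betaSeq p (T : Matrix (Fin n) (Fin n) ℚ_[p]) a x j) •
            ∑ i ∈ Finset.Icc 1 j,
              realToPadic p ((betaSeq p (T : Matrix (Fin n) (Fin n) ℚ_[p]) a x (j - i))⁻¹) •
                (((T : Matrix (Fin n) (Fin n) ℚ_[p]) ^ (i - 1)).mulVec a) := by
  intro j _
  simp only [realToPadic_betaSeq_inv ha1 hx]
  exact eq_of_scaled_affine_recurrence T.val a (fun j => (affineSphereMap p T.val a)^[j] x)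
    (fun j => realToPadic p (betaSeq p T.val a x j))
    (fun j => realToPadic p (alphaSeq p T.val a x (j + 1)))
    (by simp [betaSeq, realToPadic_one]) (realToPadic_betaSeq_succ ha1 hx)
    (fun _ => realToPadic_ne_zero _) (fun _ => iterate_succ_affineSphereMap _ _) j

/-- For `T ∈ GL(n, ℚ_p)` and `a` with `0 < ‖T⁻¹(a)‖_p < 1` and `x` in the `p`-adic unit
sphere, for every `j ≥ 1`:
`T̄_a^j(x) = β_{j,x} T^j(x) + β_{j,x} ∑_{i=1}^{j} β_{j-i,x}^{-1} T^{i-1}(a)`,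
where the positive real numbers `β_{j,x}` and `β_{j-i,x}^{-1}` (integer powers of `p`) are
interpreted as the corresponding scalars in `ℚ_p`. -/
theorem stmt19 (p : ℕ) [Fact p.Prime] (n : ℕ) (hn : 1 ≤ n) (T : GL (Fin n) ℚ_[p])
    (a : Fin n → ℚ_[p])
    (ha0 : 0 < ‖((T⁻¹ : GL (Fin n) ℚ_[p]) : Matrix (Fin n) (Fin n) ℚ_[p]).mulVec a‖)
    (ha1 : ‖((T⁻¹ : GL (Fin n) ℚ_[p]) : Matrix (Fin n) (Fin n) ℚ_[p]).mulVec a‖ < 1)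
    (x : Fin n → ℚ_[p]) (hx : ‖x‖ = 1) :
    ∀ j : ℕ, 1 ≤ j →
      (affineSphereMap p (T : Matrix (Fin n) (Fin n) ℚ_[p]) a)^[j] x =
        realToPadic p (betaSeq p (T : Matrix (Fin n) (Fin n) ℚ_[p]) a x j) •
            (((T : Matrix (Fin n) (Fin n) ℚ_[p]) ^ j).mulVec x) +
          realToPadic p (betaSeq p (T : Matrix (Fin n) (Fin n) ℚ_[p]) a x j) •
            ∑ i ∈ Finset.Icc 1 j,
              realToPadic p ((betaSeq p (T : Matrix (Fin n) (Fin n) ℚ_[p]) a x (j - i))⁻¹) •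
                (((T : Matrix (Fin n) (Fin n) ℚ_[p]) ^ (i - 1)).mulVec a) :=
  stmt19_general p n T a ha1 x hx
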